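/- If ε ∈ Γ is periodic and satisfies ε ⪯ 1(10)^∞, then the smallest period of ε is even. -/
import Mathlib


/-- A 0-1 sequence: all values are at most 1. Index `k` corresponds to `ε_{k+1}` in the paper. -/
def isSeq (ε : ℕ → ℕ) : Prop := ∀ k, ε k ≤ 1

/-- The shift map σ. -/
def shift (ε : ℕ → ℕ) : ℕ → ℕ := fun n => ε (n + 1)

/-- The mirror image ε̄, (ε̄)_n = 1 - ε_n. -/
def mirror (ε : ℕ → ℕ) : ℕ → ℕ := fun n => 1 - ε n

/-- Strict lexicographic order on sequences. -/
def lexLt (a b : ℕ → ℕ) : Prop := ∃ k, (∀ j, j < k → a j = b j) ∧ a k < b k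

/-- Non-strict lexicographic order. -/
def lexLe (a b : ℕ → ℕ) : Prop := lexLt a b ∨ a = b

/-- ε is periodic with smallest period n ≥ 1. -/
def periodicSmallest (n : ℕ) (ε : ℕ → ℕ) : Prop :=
  1 ≤ n ∧ shift^[n] ε = ε ∧ ∀ j, 1 ≤ j → j < n → shift^[j] ε ≠ ε

/-- The set Γ = {ε ∈ Σ : ε̄ ⪯ σ^k(ε) ⪯ ε for all k ≥ 0}. -/
def Gamma (ε : ℕ → ℕ) : Prop :=
  isSeq ε ∧ ∀ k, lexLe (mirror ε) (shift^[k] ε) ∧ lexLe (shift^[k] ε) ε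

/-- The sequence 1(10)^∞ = 1,1,0,1,0,1,0,…. -/
def oneTen : ℕ → ℕ := fun n => if n = 0 then 1 else n % 2

/- ### Auxiliary lemmas -/

lemma shift_iter : ∀ (k : ℕ) (ε : ℕ → ℕ) (i : ℕ), shift^[k] ε i = ε (k + i) := by
  intro k
  induction k with
  | zero => intro ε i; simp
  | succ k IH =>
    intro ε i
    rw [Function.iterate_succ_apply, IH (shift ε) i]
    show ε (k + i + 1) = ε (k + 1 + i)
    congr 1; omega

lemma lexLe_point {a b : ℕ → ℕ} (h : lexLe a b) (i : ℕ)
    (hag : ∀ j, j < i → a j = b j) : a i ≤ b i := by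
  rcases h with ⟨t, ht1, ht2⟩ | rfl
  · rcases lt_trichotomy t i with h1 | h1 | h1
    · have := hag t h1; omega
    · subst h1; omega
    · have := ht1 i h1; omega
  · exact le_refl _

lemma shift_le {ε : ℕ → ℕ} (hmax : ∀ k, lexLe (shift^[k] ε) ε) (k j : ℕ)
    (hag : ∀ i, i < j → ε (k + i) = ε i) : ε (k + j) ≤ ε j := by
  have h := lexLe_point (hmax k) j (fun i hi => by rw [shift_iter]; exact hag i hi)
  rwa [shift_iter] at h

lemma shift_ge {ε : ℕ → ℕ} (hmin : ∀ k, lexLe (mirror ε) (shift^[k] ε)) (k j : ℕ)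
    (hag : ∀ i, i < j → ε (k + i) = 1 - ε i) : 1 - ε j ≤ ε (k + j) := by
  have h := lexLe_point (hmin k) j (fun i hi => by
    rw [shift_iter]
    show 1 - ε i = ε (k + i)
    exact (hag i hi).symm)
  rw [shift_iter] at h
  exact h

/-- Claim 1: after a double `11` at position `k`, the next double occurs at even
distance and is a `00`. -/
lemma claim1 {ε : ℕ → ℕ} (hseq : isSeq ε)
    (hmax : ∀ k, lexLe (shift^[k] ε) ε)
    (s : ℕ) (hs : 1 ≤ s)
    (hpre : ∀ j, j < 2*s+1 → ε j = oneTen j)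
    (hmz : ε (2*s+1) = 0)
    (k : ℕ) (h0 : ε k = 1) (h1 : ε (k+1) = 1) :
    ∃ j, 1 ≤ j ∧ (∀ i, 1 ≤ i → i ≤ 2*j → ε (k+i) = i % 2) ∧ ε (k + 2*j + 1) = 0 := by
  have hε : ∀ i, 1 ≤ i → i < 2*s+1 → ε i = i % 2 := by
    intro i hi1 hi2
    rw [hpre i hi2]
    simp only [oneTen]
    rw [if_neg (by omega)]
  have hε0' : ε 0 = 1 := by rw [hpre 0 (by omega)]; rfl
  have agree : ∀ j, j ≤ 2*s+1 → (∀ i, 1 ≤ i → i < j → ε (k+i) = i % 2) →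
      ∀ i, i < j → ε (k + i) = ε i := by
    intro j hj halt i hij
    rcases Nat.eq_zero_or_pos i with rfl | hi
    · simpa [hε0'] using h0
    · rw [halt i hi hij, hε i hi (by omega)]
  have bound : ∀ j, j ≤ 2*s+1 → (∀ i, 1 ≤ i → i < j → ε (k+i) = i % 2) →
      ε (k + j) ≤ ε j :=
    fun j hj halt => shift_le hmax k j (agree j hj halt)
  have main : ∀ j, j ≤ s - 1 → (∀ i, 1 ≤ i → i ≤ 2*j → ε (k+i) = i % 2) ∨
      (∃ j', 1 ≤ j' ∧ (∀ i, 1 ≤ i → i ≤ 2*j' → ε (k+i) = i % 2) ∧ ε (k + 2*j' + 1) = 0) := by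
    intro j
    induction j with
    | zero => intro _; left; intro i hi1 hi2; omega
    | succ j IH =>
      intro hj
      rcases IH (by omega) with halt | hw
      · rcases (show ε (k + (2*j+1)) = 0 ∨ ε (k + (2*j+1)) = 1 from by
          have := hseq (k + (2*j+1)); omega) with hv | hv
        · rcases Nat.eq_zero_or_pos j with rfl | hjpos
          · norm_num at hv; omega
          · right
            refine ⟨j, hjpos, halt, ?_⟩
            rw [← Nat.add_assoc] at hv; exact hv
        · -- extend alternation
          have halt' : ∀ i, 1 ≤ i → i < 2*j+2 → ε (k+i) = i % 2 := by
            intro i hi1 hi2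
            rcases Nat.lt_or_ge i (2*j+1) with h | h
            · exact halt i hi1 (by omega)
            · have : i = 2*j+1 := by omega
              subst this; rw [hv]; omega
          have hb : ε (k + (2*j+2)) ≤ ε (2*j+2) := bound (2*j+2) (by omega) halt'
          have hval : ε (2*j+2) = 0 := by
            have := hε (2*j+2) (by omega) (by omega); omega
          left
          intro i hi1 hi2
          rcases Nat.lt_or_ge i (2*j+2) with h | h
          · exact halt' i hi1 h
          · have : i = 2*j+2 := by omega
            subst this; omega
      · exact Or.inr hw
  rcases main (s-1) (le_refl _) with halt | hw
  · rcases (show ε (k + (2*(s-1)+1)) = 0 ∨ ε (k + (2*(s-1)+1)) = 1 from by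
      have := hseq (k + (2*(s-1)+1)); omega) with hv | hv
    · rcases Nat.lt_or_ge s 2 with hs2 | hs2
      · have hseq1 : s = 1 := by omega
        subst hseq1
        norm_num at hv
        omega
      · refine ⟨s-1, by omega, halt, ?_⟩
        rw [← Nat.add_assoc] at hv; exact hv
    · have halt' : ∀ i, 1 ≤ i → i < 2*s → ε (k+i) = i % 2 := by
        intro i hi1 hi2
        rcases Nat.lt_or_ge i (2*(s-1)+1) with h | h
        · exact halt i hi1 (by omega)
        · have : i = 2*(s-1)+1 := by omega
          subst this; rw [hv]; omega
      have hb1 : ε (k + (2*s)) ≤ ε (2*s) := bound (2*s) (by omega) halt'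
      have h2s : ε (2*s) = 0 := by
        have := hε (2*s) (by omega) (by omega); omega
      have halt'' : ∀ i, 1 ≤ i → i < 2*s+1 → ε (k+i) = i % 2 := by
        intro i hi1 hi2
        rcases Nat.lt_or_ge i (2*s) with h | h
        · exact halt' i hi1 h
        · have : i = 2*s := by omega
          subst this; omega
      have hb2 : ε (k + (2*s+1)) ≤ ε (2*s+1) := bound (2*s+1) (by omega) halt''
      refine ⟨s, hs, fun i hi1 hi2 => halt'' i hi1 (by omega), ?_⟩
      rw [← Nat.add_assoc] at hb2
      omega
  · exact hw

/-- Claim 2: after a double `00` at position `k`, the next double occurs at even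
distance and is a `11`. -/
lemma claim2 {ε : ℕ → ℕ} (hseq : isSeq ε)
    (hmin : ∀ k, lexLe (mirror ε) (shift^[k] ε))
    (s : ℕ) (hs : 1 ≤ s)
    (hpre : ∀ j, j < 2*s+1 → ε j = oneTen j)
    (hmz : ε (2*s+1) = 0)
    (k : ℕ) (h0 : ε k = 0) (h1 : ε (k+1) = 0) :
    ∃ j, 1 ≤ j ∧ (∀ i, 1 ≤ i → i ≤ 2*j → ε (k+i) = (i+1) % 2) ∧ ε (k + 2*j + 1) = 1 := by
  have hε : ∀ i, 1 ≤ i → i < 2*s+1 → ε i = i % 2 := by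
    intro i hi1 hi2
    rw [hpre i hi2]
    simp only [oneTen]
    rw [if_neg (by omega)]
  have hε0' : ε 0 = 1 := by rw [hpre 0 (by omega)]; rfl
  have agree : ∀ j, j ≤ 2*s+1 → (∀ i, 1 ≤ i → i < j → ε (k+i) = (i+1) % 2) →
      ∀ i, i < j → ε (k + i) = 1 - ε i := by
    intro j hj halt i hij
    rcases Nat.eq_zero_or_pos i with rfl | hi
    · rw [hε0']; simpa using h0
    · have a := halt i hi hij
      have b := hε i hi (by omega)
      omega
  have bound : ∀ j, j ≤ 2*s+1 → (∀ i, 1 ≤ i → i < j → ε (k+i) = (i+1) % 2) →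
      1 - ε j ≤ ε (k + j) :=
    fun j hj halt => shift_ge hmin k j (agree j hj halt)
  have main : ∀ j, j ≤ s - 1 → (∀ i, 1 ≤ i → i ≤ 2*j → ε (k+i) = (i+1) % 2) ∨
      (∃ j', 1 ≤ j' ∧ (∀ i, 1 ≤ i → i ≤ 2*j' → ε (k+i) = (i+1) % 2) ∧ ε (k + 2*j' + 1) = 1) := by
    intro j
    induction j with
    | zero => intro _; left; intro i hi1 hi2; omega
    | succ j IH =>
      intro hj
      rcases IH (by omega) with halt | hw
      · rcases (show ε (k + (2*j+1)) = 0 ∨ ε (k + (2*j+1)) = 1 from by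
          have := hseq (k + (2*j+1)); omega) with hv | hv
        · -- continue alternating
          have halt' : ∀ i, 1 ≤ i → i < 2*j+2 → ε (k+i) = (i+1) % 2 := by
            intro i hi1 hi2
            rcases Nat.lt_or_ge i (2*j+1) with h | h
            · exact halt i hi1 (by omega)
            · have : i = 2*j+1 := by omega
              subst this; rw [hv]; omega
          have hb : 1 - ε (2*j+2) ≤ ε (k + (2*j+2)) := bound (2*j+2) (by omega) halt'
          have hval : ε (2*j+2) = 0 := by
            have := hε (2*j+2) (by omega) (by omega); omega
          have hv2 : ε (k + (2*j+2)) = 1 := by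
            have := hseq (k + (2*j+2)); omega
          left
          intro i hi1 hi2
          rcases Nat.lt_or_ge i (2*j+2) with h | h
          · exact halt' i hi1 h
          · have : i = 2*j+2 := by omega
            subst this; rw [hv2]; omega
        · rcases Nat.eq_zero_or_pos j with rfl | hjpos
          · norm_num at hv; omega
          · right
            refine ⟨j, hjpos, halt, ?_⟩
            rw [← Nat.add_assoc] at hv; exact hv
      · exact Or.inr hw
  rcases main (s-1) (le_refl _) with halt | hw
  · rcases (show ε (k + (2*(s-1)+1)) = 0 ∨ ε (k + (2*(s-1)+1)) = 1 from by
      have := hseq (k + (2*(s-1)+1)); omega) with hv | hv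
    · have halt' : ∀ i, 1 ≤ i → i < 2*s → ε (k+i) = (i+1) % 2 := by
        intro i hi1 hi2
        rcases Nat.lt_or_ge i (2*(s-1)+1) with h | h
        · exact halt i hi1 (by omega)
        · have : i = 2*(s-1)+1 := by omega
          subst this; rw [hv]; omega
      have hb1 : 1 - ε (2*s) ≤ ε (k + (2*s)) := bound (2*s) (by omega) halt'
      have h2s : ε (2*s) = 0 := by
        have := hε (2*s) (by omega) (by omega); omega
      have hv2 : ε (k + (2*s)) = 1 := by
        have := hseq (k + (2*s)); omega
      have halt'' : ∀ i, 1 ≤ i → i < 2*s+1 → ε (k+i) = (i+1) % 2 := by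
        intro i hi1 hi2
        rcases Nat.lt_or_ge i (2*s) with h | h
        · exact halt' i hi1 h
        · have : i = 2*s := by omega
          subst this; rw [hv2]; omega
      have hb2 : 1 - ε (2*s+1) ≤ ε (k + (2*s+1)) := bound (2*s+1) (by omega) halt''
      have hv3 : ε (k + (2*s+1)) = 1 := by
        have := hseq (k + (2*s+1)); omega
      refine ⟨s, hs, fun i hi1 hi2 => halt'' i hi1 (by omega), ?_⟩
      rw [← Nat.add_assoc] at hv3
      exact hv3
    · rcases Nat.lt_or_ge s 2 with hs2 | hs2
      · have hseq1 : s = 1 := by omega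
        subst hseq1
        norm_num at hv
        omega
      · refine ⟨s-1, by omega, halt, ?_⟩
        rw [← Nat.add_assoc] at hv; exact hv
  · exact hw

/-- All double positions are even. -/
lemma doubles_even {ε : ℕ → ℕ} (hseq : isSeq ε)
    (hmin : ∀ k, lexLe (mirror ε) (shift^[k] ε))
    (hmax : ∀ k, lexLe (shift^[k] ε) ε)
    (s : ℕ) (hs : 1 ≤ s)
    (hpre : ∀ j, j < 2*s+1 → ε j = oneTen j)
    (hmz : ε (2*s+1) = 0)
    (k : ℕ) : ε k = ε (k+1) → Even k := by
  have hε0' : ε 0 = 1 := by rw [hpre 0 (by omega)]; rfl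
  have hε1' : ε 1 = 1 := by rw [hpre 1 (by omega)]; rfl
  induction k using Nat.strong_induction_on with
  | _ k IH =>
    intro hdk
    rcases Nat.eq_zero_or_pos k with rfl | hk
    · exact Even.zero
    · have hP0 : ε 0 = ε 1 := by rw [hε0', hε1']
      set k' := Nat.findGreatest (fun d => ε d = ε (d+1)) (k-1) with hk'def
      have hPk' : ε k' = ε (k'+1) :=
        Nat.findGreatest_spec (P := fun d => ε d = ε (d+1)) (Nat.zero_le _) hP0
      have hk'le : k' ≤ k - 1 := Nat.findGreatest_le _
      have hIH : Even k' := IH k' (by omega) hPk'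
      have hgr : ∀ d, k' < d → d ≤ k - 1 → ¬ (ε d = ε (d+1)) := fun d h1 h2 =>
        Nat.findGreatest_is_greatest (P := fun d => ε d = ε (d+1)) h1 h2
      rcases (show ε k' = 0 ∨ ε k' = 1 from by have := hseq k'; omega) with hc | hc
      · obtain ⟨j, hj1, H, Hend⟩ := claim2 hseq hmin s hs hpre hmz k' hc (by omega)
        have hH2j := H (2*j) (by omega) (le_refl _)
        have hd2 : ε (k' + 2*j) = ε (k' + 2*j + 1) := by omega
        rcases lt_trichotomy (k' + 2*j) k with hlt | heq | hgt
        · exact absurd hd2 (hgr _ (by omega) (by omega))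
        · rw [Nat.even_iff] at hIH ⊢; omega
        · have hi1 : 1 ≤ k - k' := by omega
          have e1 := H (k - k') hi1 (by omega)
          have e2 := H (k - k' + 1) (by omega) (by omega)
          rw [show k' + (k - k') = k from by omega] at e1
          rw [show k' + (k - k' + 1) = k + 1 from by omega] at e2
          omega
      · obtain ⟨j, hj1, H, Hend⟩ := claim1 hseq hmax s hs hpre hmz k' hc (by omega)
        have hH2j := H (2*j) (by omega) (le_refl _)
        have hd2 : ε (k' + 2*j) = ε (k' + 2*j + 1) := by omega
        rcases lt_trichotomy (k' + 2*j) k with hlt | heq | hgt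
        · exact absurd hd2 (hgr _ (by omega) (by omega))
        · rw [Nat.even_iff] at hIH ⊢; omega
        · have hi1 : 1 ≤ k - k' := by omega
          have e1 := H (k - k') hi1 (by omega)
          have e2 := H (k - k' + 1) (by omega) (by omega)
          rw [show k' + (k - k') = k from by omega] at e1
          rw [show k' + (k - k' + 1) = k + 1 from by omega] at e2
          omega

/-- If ε ∈ Γ is periodic and ε ⪯ 1(10)^∞, then its smallest period is even. -/
theorem stmt14 (ε : ℕ → ℕ) (hΓ : Gamma ε) (hle : lexLe ε oneTen) (n : ℕ)
    (hper : periodicSmallest n ε) : Even n := by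
  obtain ⟨hseq, hΓ2⟩ := hΓ
  have hmin : ∀ k, lexLe (mirror ε) (shift^[k] ε) := fun k => (hΓ2 k).1
  have hmax : ∀ k, lexLe (shift^[k] ε) ε := fun k => (hΓ2 k).2
  obtain ⟨hn1, hP, hsmall⟩ := hper
  have hper' : ∀ i, ε (n + i) = ε i := by
    intro i
    conv_rhs => rw [← hP]
    rw [shift_iter]
  have hε0 : ε 0 = 1 := by
    have h := hmin 0
    simp only [Function.iterate_zero, id_eq] at h
    unfold lexLe lexLt at h
    rcases h with ⟨t, ht1, ht2⟩ | heq
    · rcases Nat.eq_zero_or_pos t with rfl | hpos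
      · have := hseq 0; simp only [mirror] at ht2; omega
      · have h0 := ht1 0 hpos
        have := hseq 0
        simp only [mirror] at h0
        omega
    · have h0 := congrFun heq 0
      have := hseq 0
      simp only [mirror] at h0
      omega
  rcases (show ε 1 = 0 ∨ ε 1 = 1 from by have := hseq 1; omega) with hε1 | hε1
  · -- alternating case: period 2
    have halt : ∀ k, ε (k+1) = 1 - ε k := by
      intro k
      rcases (show ε k = 0 ∨ ε k = 1 from by have := hseq k; omega) with h | h
      · have hb := shift_ge hmin k 1 (fun i hi => by
          have : i = 0 := by omega
          subst this
          show ε (k + 0) = 1 - ε 0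
          rw [hε0]; simpa using h)
        have := hseq (k+1)
        rw [show k + 1 = k + 1 from rfl] at hb
        omega
      · have hb := shift_le hmax k 1 (fun i hi => by
          have : i = 0 := by omega
          subst this
          show ε (k + 0) = ε 0
          rw [hε0]; simpa using h)
        omega
    have h2 : shift^[2] ε = ε := by
      funext i
      rw [shift_iter]
      have a1 := halt i
      have a2 := halt (i+1)
      have := hseq i
      rw [show 2 + i = i + 1 + 1 from by omega]
      omega
    have hn2 : n ≤ 2 := by
      by_contra hgt
      exact hsmall 2 (by omega) (by omega) h2
    rcases (show n = 1 ∨ n = 2 from by omega) with rfl | rfl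
    · exfalso
      have h10 := hper' 0
      simp only [Nat.add_zero] at h10
      omega
    · exact ⟨1, rfl⟩
  · -- main case
    unfold lexLe at hle
    rcases hle with h | heq
    · unfold lexLt at h
      obtain ⟨m, hag, hlt⟩ := h
      have hot : oneTen m ≤ 1 := by
        simp only [oneTen]; split <;> omega
      have hεm0 : ε m = 0 := by omega
      have hotm : oneTen m = 1 := by omega
      have hm0 : m ≠ 0 := by
        intro h'; subst h'; omega
      have hm1 : m ≠ 1 := by
        intro h'; subst h'; omega
      have hmodd : m % 2 = 1 := by
        simp only [oneTen, if_neg hm0] at hotm; exact hotm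
      have hms : m = 2*(m/2)+1 := by omega
      set s := m / 2 with hsdef
      have hs1 : 1 ≤ s := by omega
      have hpre : ∀ j, j < 2*s+1 → ε j = oneTen j := fun j hj => hag j (by omega)
      have hmz : ε (2*s+1) = 0 := by rw [← hms]; exact hεm0
      have hdn : ε n = ε (n+1) := by
        have e0 := hper' 0
        have e1 := hper' 1
        simp only [Nat.add_zero] at e0
        omega
      exact doubles_even hseq hmin hmax s hs1 hpre hmz n hdn
    · exfalso
      have e0 : oneTen n = oneTen 0 := by
        have h := hper' 0; rw [heq] at h; exact h
      have e1 : oneTen (n+1) = oneTen 1 := by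
        have h := hper' 1; rw [heq] at h; exact h
      have vn : oneTen n = n % 2 := by
        simp only [oneTen]; rw [if_neg (by omega)]
      have vn1 : oneTen (n+1) = (n+1) % 2 := by
        simp only [oneTen]; rw [if_neg (by omega)]
      have v0 : oneTen 0 = 1 := rfl
      have v1 : oneTen 1 = 1 := rfl
      omega
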